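/- If a finite simple undirected graph G has vertex connectivity at least ⌊3f/2⌋ + 1 and every vertex has degree at least 2f (for f > 0), then G is f-good. -/

import Mathlib

open Finset

/-- Γ(S): vertices outside `S` with a neighbor in `S`. -/
def nbhd {V : Type*} [Fintype V] [DecidableEq V] (G : SimpleGraph V) [DecidableRel G.Adj]
    (S : Finset V) : Finset V :=
  Finset.univ.filter (fun v => v ∉ S ∧ ∃ u ∈ S, G.Adj u v)

/-- `T →k S`: `|Γ(S) ∩ T| ≥ k`. -/
def connTo {V : Type*} [Fintype V] [DecidableEq V] (G : SimpleGraph V) [DecidableRel G.Adj]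
    (k : ℕ) (T S : Finset V) : Prop :=
  k ≤ (nbhd G S ∩ T).card

/-- `(L, C, R)` is an `F`-partition. -/
def FPartition {V : Type*} [Fintype V] [DecidableEq V] (F L C R : Finset V) : Prop :=
  Disjoint L C ∧ Disjoint L R ∧ Disjoint C R ∧ L ∪ C ∪ R = Finset.univ ∧
    (L \ F).Nonempty ∧ (R \ F).Nonempty

/-- `G` is `f`-good. -/
def fGood {V : Type*} [Fintype V] [DecidableEq V] (G : SimpleGraph V) [DecidableRel G.Adj]
    (f : ℕ) : Prop :=
  ∀ F L C R : Finset V, F.card ≤ f → FPartition F L C R →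
    connTo G (f + 1) (R ∪ C) (L \ F) ∨ connTo G (f + 1) (L ∪ C) (R \ F)

/-- `G` is `k`-connected: more than `k` vertices, and removing fewer than `k`
vertices leaves the graph connected. -/
def kConnected {V : Type*} [Fintype V] [DecidableEq V] (G : SimpleGraph V) (k : ℕ) : Prop :=
  k < Fintype.card V ∧
    ∀ T : Finset V, T.card < k → ((⊤ : G.Subgraph).deleteVerts ↑T).coe.Connected

/-!
Suppose both crossings of an `F`-partition `(L, C, R)` are small: `S₁ = Γ(L \ F) ∩ (R ∪ C)` and
`S₂ = Γ(R \ F) ∩ (L ∪ C)` have at most `f` vertices, and, by symmetry, `|F ∩ L| ≤ ⌊f/2⌋`.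
Every neighbour of `L \ F` lies in `T = S₁ ∪ (F ∩ L)`, and `|T| ≤ ⌊3f/2⌋`, so removing `T`
leaves a connected graph in which `L \ F` is a nonempty union of components; hence `L \ F`
contains every vertex outside `T`. A vertex `b ∈ R \ F` must then lie in `S₁`, and all its
neighbours lie in `S₁ ∪ S₂`, which has at most `2f` vertices, one of them `b` itself.
This contradicts `deg b ≥ 2f`.
-/

namespace SimpleGraph

lemma Reachable.mem_of_adj_mem {W : Type*} {H : SimpleGraph W} {A : Set W}
    (hA : ∀ ⦃u v : W⦄, u ∈ A → H.Adj u v → v ∈ A) {u v : W}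
    (h : H.Reachable u v) (hu : u ∈ A) : v ∈ A := by
  obtain ⟨w⟩ := h
  induction w with
  | nil => exact hu
  | cons h _ ih => exact ih (hA hu h)

end SimpleGraph

section

variable {V : Type*} [Fintype V] [DecidableEq V]

lemma FPartition.swap {F L C R : Finset V} (hp : FPartition F L C R) : FPartition F R C L := by
  obtain ⟨hLC, hLR, hCR, huniv, hL, hR⟩ := hp
  refine ⟨hCR.symm, hLR.symm, hLC.symm, ?_, hR, hL⟩
  rw [← huniv]
  ac_rfl

omit [Fintype V] in
lemma card_inter_add_card_inter_le {F L R : Finset V} (hLR : Disjoint L R) :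
    (F ∩ L).card + (F ∩ R).card ≤ F.card :=
  calc (F ∩ L).card + (F ∩ R).card = (F ∩ L ∪ F ∩ R).card :=
        (card_union_of_disjoint (hLR.mono inter_subset_right inter_subset_right)).symm
    _ ≤ F.card := card_le_card (union_subset inter_subset_left inter_subset_left)

variable (G : SimpleGraph V) [DecidableRel G.Adj]

@[simp]
lemma mem_nbhd {S : Finset V} {v : V} : v ∈ nbhd G S ↔ v ∉ S ∧ ∃ u ∈ S, G.Adj u v := by
  simp [nbhd]

lemma univ_sdiff_subset_of_nbhd_subset {A T : Finset V}
    (hconn : ((⊤ : G.Subgraph).deleteVerts ↑T).coe.Connected)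
    (hA : (A \ T).Nonempty) (hAT : nbhd G A ⊆ T) : univ \ T ⊆ A := by
  obtain ⟨a, ha⟩ := hA
  rw [mem_sdiff] at ha
  intro v hv
  rw [mem_sdiff] at hv
  let W := ((⊤ : G.Subgraph).deleteVerts ↑T).verts
  have hreach := hconn.preconnected (⟨a, by simp [W, ha.2]⟩ : W) (⟨v, by simp [W, hv.2]⟩ : W)
  refine hreach.mem_of_adj_mem (A := {z : W | (z : V) ∈ A}) (fun x y hx hxy => ?_) ha.1
  by_contra hy
  exact y.2.2 (hAT ((mem_nbhd G).2 ⟨hy, x, hx, SimpleGraph.Subgraph.coe_adj_sub _ _ _ hxy⟩))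

lemma nbhd_sdiff_subset {F L C R : Finset V} (huniv : L ∪ C ∪ R = univ) :
    nbhd G (L \ F) ⊆ nbhd G (L \ F) ∩ (R ∪ C) ∪ F ∩ L := by
  intro v hv
  have hvLF := ((mem_nbhd G).1 hv).1
  have hvuniv : v ∈ L ∪ C ∪ R := huniv ▸ mem_univ v
  simp only [mem_sdiff, mem_union, mem_inter] at hvLF hvuniv ⊢
  tauto

lemma neighborFinset_ssubset {F L C R S : Finset V} {b : V} (hLR : Disjoint L R)
    (hb : b ∈ R \ F) (hS : univ \ L ⊆ S) :
    G.neighborFinset b ⊂ S ∪ nbhd G (R \ F) ∩ (L ∪ C) := by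
  have hbS : b ∈ S := hS (mem_sdiff.2 ⟨mem_univ b, disjoint_right.1 hLR (mem_sdiff.1 hb).1⟩)
  refine (ssubset_iff_of_subset fun u hu => ?_).2
    ⟨b, mem_union_left _ hbS, G.notMem_neighborFinset_self b⟩
  rw [SimpleGraph.mem_neighborFinset] at hu
  by_cases huL : u ∈ L
  · have huR : u ∉ R \ F := fun h => disjoint_left.1 hLR huL (mem_sdiff.1 h).1
    exact mem_union_right _ (mem_inter.2 ⟨(mem_nbhd G).2 ⟨huR, b, hb, hu⟩, mem_union_left _ huL⟩)
  · exact mem_union_left _ (hS (mem_sdiff.2 ⟨mem_univ u, huL⟩))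

lemma connTo_or_connTo_of_card_inter_le {f : ℕ} {F L C R : Finset V}
    (hconn : kConnected G (3 * f / 2 + 1)) (hdeg : ∀ v : V, 2 * f ≤ G.degree v)
    (hp : FPartition F L C R) (hFL : (F ∩ L).card ≤ f / 2) :
    connTo G (f + 1) (R ∪ C) (L \ F) ∨ connTo G (f + 1) (L ∪ C) (R \ F) := by
  obtain ⟨-, hLR, -, huniv, ⟨a, ha⟩, ⟨b, hb⟩⟩ := hp
  unfold connTo
  by_contra! ⟨h₁, h₂⟩
  set S₁ := nbhd G (L \ F) ∩ (R ∪ C)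
  set S₂ := nbhd G (R \ F) ∩ (L ∪ C)
  set T := S₁ ∪ F ∩ L
  have hT : T.card < 3 * f / 2 + 1 := by
    have : T.card ≤ S₁.card + (F ∩ L).card := card_union_le _ _
    omega
  have haT : a ∈ (L \ F) \ T := by
    refine mem_sdiff.2 ⟨ha, fun haT => ?_⟩
    rcases mem_union.1 haT with haS | haF
    · exact ((mem_nbhd G).1 (mem_inter.1 haS).1).1 ha
    · exact (mem_sdiff.1 ha).2 (mem_inter.1 haF).1
  have hcover : univ \ T ⊆ L \ F :=
    univ_sdiff_subset_of_nbhd_subset G (hconn.2 T hT) ⟨a, haT⟩ (nbhd_sdiff_subset G huniv)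
  have hout : univ \ L ⊆ S₁ := by
    intro u hu
    have huL := (mem_sdiff.1 hu).2
    have huT : u ∈ T := by_contra fun huT =>
      huL (mem_sdiff.1 (hcover (mem_sdiff.2 ⟨mem_univ u, huT⟩))).1
    exact (mem_union.1 huT).resolve_right fun h => huL (mem_inter.1 h).2
  have : 2 * f < 2 * f := calc
    2 * f ≤ G.degree b := hdeg b
    _ = (G.neighborFinset b).card := (G.card_neighborFinset_eq_degree b).symm
    _ < (S₁ ∪ S₂).card := card_lt_card (neighborFinset_ssubset G hLR hb hout)
    _ ≤ S₁.card + S₂.card := card_union_le _ _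
    _ ≤ 2 * f := by omega
  exact lt_irrefl _ this

end

theorem stmt3_general {V : Type*} [Fintype V] [DecidableEq V] (G : SimpleGraph V) [DecidableRel G.Adj]
    (f : ℕ) (hconn : kConnected G (3 * f / 2 + 1))
    (hdeg : ∀ v : V, 2 * f ≤ G.degree v) : fGood G f := by
  intro F L C R hF hp
  have hsplit := card_inter_add_card_inter_le (F := F) hp.2.1
  rcases (by omega : (F ∩ L).card ≤ f / 2 ∨ (F ∩ R).card ≤ f / 2) with hFL | hFR
  · exact connTo_or_connTo_of_card_inter_le G hconn hdeg hp hFL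
  · exact (connTo_or_connTo_of_card_inter_le G hconn hdeg hp.swap hFR).symm

theorem stmt3 {V : Type*} [Fintype V] [DecidableEq V] (G : SimpleGraph V) [DecidableRel G.Adj]
    (f : ℕ) (hf : 0 < f) (hconn : kConnected G (3 * f / 2 + 1))
    (hdeg : ∀ v : V, 2 * f ≤ G.degree v) : fGood G f :=
  stmt3_general G f hconn hdeg
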